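/- Let e ≥ 1 be an integer and let k be a positive integer. If e < 3, assume gcd(k, 3·2^{e−1}) = 1; then D_k(u, 1) = u for all u ∈ ℤ/2^eℤ if and only if k ≡ 1 or k ≡ −1 (mod 3·2^{e−1}). If e ≥ 3, assume gcd(k, 3·2^{e−2}) = 1; then D_k(u, 1) = u for all u ∈ ℤ/2^eℤ if and only if k ≡ 1 or k ≡ −1 (mod 3·2^{e−2}). -/

import Mathlib

open Polynomial

/-!
Let `w` be a root of `X ^ 2 - u * X + 1` over `ZMod (2 ^ e)`, so that `u = w + w⁻¹` and
`D_k(u) = w ^ k + w⁻¹ ^ k`. Then `w ^ k * (D_k(u) - u) = (w ^ (k - 1) - 1) * (w ^ (k + 1) - 1)`,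
and `D_k(u) = u` exactly when this product vanishes.

If `u` is odd, `w ^ 6 - 1 = (u ^ 2 - 1) * w ^ 2 * (w ^ 2 - 1)` is divisible by `8`, hence
`w ^ (3 * 2 ^ (e - 2)) = 1`. If `u = 2 * v` is even, `x = w ^ (2 ^ i) - 1` with
`i = max 2 (e - 2)` satisfies `x ^ 2 = 0` and `x * (w ^ 2 - 1) = 0`, which kills the product as
soon as `2 ^ i` divides `k - 1` or `k + 1`. Conversely, for `u = 3` we get `w ^ 3 = 1 + 4 * w * (w - 1)` with
`w * (w - 1)` a unit, so `w ^ 3` has order exactly `2 ^ (e - 2)`. As `w ^ 3 ≡ 1 [mod 4]` and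
`w - 1`, `w ^ 2 - 1` are units, the factor whose exponent is not divisible by `3` is a unit, so
the other one vanishes.
-/

section TwoAdic

variable {S : Type*} [CommRing S]

theorem two_pow_mul_sub_one_dvd_pow_two_pow_sub_one {x : S} (h : 2 ∣ x - 1) (i : ℕ) :
    2 ^ i * (x - 1) ∣ x ^ 2 ^ i - 1 := by
  induction i with
  | zero => simp
  | succ i ih =>
    obtain ⟨c, hc⟩ := ih
    obtain ⟨d, hd⟩ := h.trans (sub_one_dvd_pow_sub_one x (2 ^ i))
    refine ⟨c * (1 + d), ?_⟩
    rw [pow_succ, pow_mul]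
    linear_combination (x ^ 2 ^ i - 1) * hd + 2 * (1 + d) * hc

theorem exists_isUnit_one_add_two_pow_mul_pow_two_pow (h2 : IsNilpotent (2 : S)) {y : S}
    (hy : IsUnit y) (t i : ℕ) :
    ∃ y', IsUnit y' ∧ (1 + 2 ^ (t + 2) * y) ^ 2 ^ i = 1 + 2 ^ (t + 2 + i) * y' := by
  induction i with
  | zero => exact ⟨y, hy, by simp⟩
  | succ i ih =>
    obtain ⟨y', hy', h⟩ := ih
    have hnil : IsNilpotent (2 ^ (t + 1 + i) * y') := by
      rw [show t + 1 + i = t + i + 1 by ring, pow_succ', mul_assoc]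
      exact (Commute.all _ _).isNilpotent_mul_right h2
    refine ⟨y' * (1 + 2 ^ (t + 1 + i) * y'), hy'.mul hnil.isUnit_one_add, ?_⟩
    rw [pow_succ (2 : ℕ) i, pow_mul, h]
    ring

theorem orderOf_one_add_four_mul {y : S} (hy : IsUnit y) {j : ℕ} (h2 : (2 : S) ^ (j + 2) = 0)
    (hne : (2 : S) ^ (j + 1) ≠ 0) : orderOf (1 + 4 * y) = 2 ^ j := by
  have hpow := exists_isUnit_one_add_two_pow_mul_pow_two_pow ⟨_, h2⟩ hy 0
  simp only [zero_add, show (2 : S) ^ 2 = 4 by norm_num] at hpow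
  rcases j with _ | i
  · simp [show (4 : S) = 0 by linear_combination h2]
  · apply orderOf_eq_prime_pow
    · obtain ⟨y', hy', h⟩ := hpow i
      rw [h, add_eq_left, hy'.mul_left_eq_zero, add_comm]
      exact hne
    · obtain ⟨_, _, h⟩ := hpow (i + 1)
      rw [h, show 2 + (i + 1) = i + 1 + 2 by ring, h2, zero_mul, add_zero]

end TwoAdic

section QuadraticUnit

variable {S : Type*} [CommRing S] {u w : S}

theorem mul_sub_eq_one_of_sq_eq (hw : w ^ 2 = u * w - 1) : w * (u - w) = 1 := by
  linear_combination -hw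

theorem pow_three_sub_one_of_sq_eq (hw : w ^ 2 = u * w - 1) :
    w ^ 3 - 1 = (u + 1) * w * (w - 1) := by
  linear_combination (w - 1) * hw

theorem pow_six_sub_one_of_sq_eq (hw : w ^ 2 = u * w - 1) :
    w ^ 6 - 1 = (u ^ 2 - 1) * w ^ 2 * (w ^ 2 - 1) := by
  have hplus : w ^ 3 + 1 = (u - 1) * w * (w + 1) := by linear_combination (w + 1) * hw
  linear_combination (w ^ 3 + 1) * pow_three_sub_one_of_sq_eq hw + (u + 1) * w * (w - 1) * hplus

theorem pow_succ_mul_eval_dickson_sub (hw : w ^ 2 = u * w - 1) (n : ℕ) :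
    w ^ (n + 1) * (eval u (dickson 1 1 (n + 1)) - u) = (w ^ n - 1) * (w ^ (n + 2) - 1) := by
  have hinv := mul_sub_eq_one_of_sq_eq hw
  have hD := dickson_one_one_eval_add_inv w (u - w) hinv (n + 1)
  rw [add_sub_cancel] at hD
  have hpow : w ^ (n + 1) * (u - w) ^ (n + 1) = 1 := by rw [← mul_pow, hinv, one_pow]
  rw [hD]
  linear_combination hpow + w ^ n * hw

theorem mul_pow_sub_one_eq_zero (hw : w ^ 2 = u * w - 1) {M n : ℕ}
    (hsq : (w ^ M - 1) ^ 2 = 0) (hmul : (w ^ M - 1) * (w ^ 2 - 1) = 0)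
    (hn : M ∣ n ∨ M ∣ n + 2) : (w ^ n - 1) * (w ^ (n + 2) - 1) = 0 := by
  have hmult : ∀ d, (w ^ (M * d) - 1) ^ 2 = 0 ∧ (w ^ (M * d) - 1) * (w ^ 2 - 1) = 0 := by
    intro d
    obtain ⟨c, hc⟩ : w ^ M - 1 ∣ w ^ (M * d) - 1 := by
      rw [pow_mul]
      exact sub_one_dvd_pow_sub_one _ d
    rw [hc]
    exact ⟨by linear_combination c ^ 2 * hsq, by linear_combination c * hmul⟩
  rcases hn with ⟨d, rfl⟩ | ⟨d, hd⟩
  · obtain ⟨h1, h2⟩ := hmult d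
    linear_combination w ^ 2 * h1 + h2
  · obtain ⟨h1, h2⟩ := hmult d
    rw [← hd] at h1 h2
    linear_combination (u - w) ^ 2 * (h1 - h2)
      - (w ^ n - 1) * (w ^ (n + 2) - 1) * (1 + w * (u - w)) * mul_sub_eq_one_of_sq_eq hw

theorem pow_six_mul_two_pow_eq_one (hw : w ^ 2 = u * w - 1) (hu : 8 ∣ u ^ 2 - 1) {i : ℕ}
    (h2 : (2 : S) ^ (i + 3) = 0) : w ^ (6 * 2 ^ i) = 1 := by
  have h8 : (2 : S) ^ 3 ∣ w ^ 6 - 1 := by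
    rw [pow_six_sub_one_of_sq_eq hw, show (2 : S) ^ 3 = 8 by norm_num]
    exact (hu.mul_right _).mul_right _
  have hlift := two_pow_mul_sub_one_dvd_pow_two_pow_sub_one (dvd_trans ⟨4, by norm_num⟩ h8) i
  have : (2 : S) ^ (i + 3) ∣ w ^ (6 * 2 ^ i) - 1 := by
    rw [pow_mul, pow_add]
    exact (mul_dvd_mul_left _ h8).trans hlift
  rwa [h2, zero_dvd_iff, sub_eq_zero] at this

theorem pow_two_pow_sub_one_sq_eq_zero_and_mul_eq_zero {v : S} (hw : w ^ 2 = 2 * v * w - 1)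
    (hv : 2 ∣ v * (v ^ 2 - 1)) {i : ℕ} (h2 : (2 : S) ^ (i + 4) = 0) :
    (w ^ 2 ^ (i + 2) - 1) ^ 2 = 0 ∧ (w ^ 2 ^ (i + 2) - 1) * (w ^ 2 - 1) = 0 := by
  have h4 : w ^ 4 - 1 = 4 * (v * w * (v * w - 1)) := by
    linear_combination (w ^ 2 + 2 * v * w - 1) * hw
  -- as `w ^ 2 - 1 = 2 * (v * w - 1)`, the second claim needs `v * (v * w - 1) ^ 2` to be even
  have hz : (v * w - 1) ^ 2 = (v ^ 2 - 1) * w ^ 2 := by linear_combination hw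
  obtain ⟨c, hc⟩ := two_pow_mul_sub_one_dvd_pow_two_pow_sub_one
    (x := w ^ 4) ⟨2 * (v * w * (v * w - 1)), by rw [h4]; ring⟩ i
  have hx : w ^ 2 ^ (i + 2) - 1 = 2 ^ (i + 2) * (v * w * (v * w - 1) * c) := by
    rw [show 2 ^ (i + 2) = 4 * 2 ^ i by ring, pow_mul, hc, h4]
    ring
  obtain ⟨t, ht⟩ := hv
  rw [hx]
  constructor
  · linear_combination 2 ^ i * (v * w * (v * w - 1) * c) ^ 2 * h2
  · linear_combination (2 ^ (i + 2) * v * w * (v * w - 1) * c) * hw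
      + (2 ^ (i + 3) * v * w * c) * hz + (2 ^ (i + 3) * w ^ 3 * c) * ht + (t * w ^ 3 * c) * h2

theorem mul_pow_sub_one_eq_zero_of_dvd {a : ℤ} (hw : w ^ 2 = a * w - 1) {j n : ℕ} (hj : 1 ≤ j)
    (h2 : (2 : S) ^ (j + 2) = 0) (hn : 3 * 2 ^ j ∣ n ∨ 3 * 2 ^ j ∣ n + 2) :
    (w ^ n - 1) * (w ^ (n + 2) - 1) = 0 := by
  rcases Int.even_or_odd' a with ⟨b, rfl | rfl⟩
  · have hw' : w ^ 2 = 2 * (b : S) * w - 1 := by push_cast at hw; linear_combination hw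
    have hb : (2 : S) ∣ b * (b ^ 2 - 1) := by
      have hb' : (2 : ℤ) ∣ b * (b ^ 2 - 1) := by
        rw [show b * (b ^ 2 - 1) = (b - 1) * (b * (b + 1)) by ring]
        exact (Int.even_mul_succ_self b).two_dvd.mul_left _
      exact_mod_cast Int.cast_dvd_cast _ _ hb'
    -- for `j = 1` the even number `n` is `0` or `4` mod `6`, so `4` divides `n` or `n + 2`
    obtain ⟨i, hi, hM⟩ :
        ∃ i, (2 : S) ^ (i + 4) = 0 ∧ (2 ^ (i + 2) ∣ n ∨ 2 ^ (i + 2) ∣ n + 2) := by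
      obtain rfl | hj := hj.eq_or_lt
      · exact ⟨0, by rw [pow_succ, h2, zero_mul], by omega⟩
      · obtain ⟨i, rfl⟩ : ∃ i, j = i + 2 := ⟨j - 2, by omega⟩
        exact ⟨i, h2, hn.imp (dvd_trans (dvd_mul_left _ 3)) (dvd_trans (dvd_mul_left _ 3))⟩
    obtain ⟨hsq, hmul⟩ := pow_two_pow_sub_one_sq_eq_zero_and_mul_eq_zero hw' hb hi
    exact mul_pow_sub_one_eq_zero hw hsq hmul hM
  · obtain ⟨i, rfl⟩ : ∃ i, j = i + 1 := ⟨j - 1, by omega⟩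
    have h8 : (8 : S) ∣ ((2 * b + 1 : ℤ) : S) ^ 2 - 1 := by
      exact_mod_cast Int.cast_dvd_cast _ _
        (Int.eight_dvd_sq_sub_one_of_odd (odd_two_mul_add_one b))
    have h1 : w ^ (3 * 2 ^ (i + 1)) = 1 := by
      rw [show 3 * 2 ^ (i + 1) = 6 * 2 ^ i by ring]
      exact pow_six_mul_two_pow_eq_one hw h8 (by rwa [show i + 3 = i + 1 + 2 by ring])
    exact mul_pow_sub_one_eq_zero hw (by rw [h1]; ring) (by rw [h1]; ring) hn

theorem mul_pow_sub_one_eq_zero_of_two_eq_zero {a : ℤ} (hw : w ^ 2 = a * w - 1) {n : ℕ}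
    (h2 : (2 : S) = 0) (hn : 3 ∣ n ∨ 3 ∣ n + 2) : (w ^ n - 1) * (w ^ (n + 2) - 1) = 0 := by
  rcases Int.even_or_odd' a with ⟨b, rfl | rfl⟩
  · have hw1 : w ^ 2 = 1 := by push_cast at hw; linear_combination hw + (b * w - 1) * h2
    exact mul_pow_sub_one_eq_zero hw (M := 1) (by linear_combination hw1 + (1 - w) * h2)
      (by linear_combination (w - 1) * hw1) (Or.inl (one_dvd n))
  · have h1 : w ^ 3 = 1 := by
      push_cast at hw
      linear_combination pow_three_sub_one_of_sq_eq hw + ((b + 1) * w * (w - 1)) * h2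
    exact mul_pow_sub_one_eq_zero hw (by rw [h1]; ring) (by rw [h1]; ring) hn

theorem dvd_or_dvd_of_mul_pow_sub_one_eq_zero (hw : w ^ 2 = 3 * w - 1) {j n : ℕ}
    (h2 : (2 : S) ^ (j + 2) = 0) (hne : (2 : S) ^ (j + 1) ≠ 0) (h3 : ¬ 3 ∣ n + 1)
    (h : (w ^ n - 1) * (w ^ (n + 2) - 1) = 0) : 3 * 2 ^ j ∣ n ∨ 3 * 2 ^ j ∣ n + 2 := by
  have hnil : IsNilpotent (2 : S) := ⟨_, h2⟩
  have hw3 : w ^ 3 = 1 + 4 * (w * (w - 1)) := by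
    linear_combination pow_three_sub_one_of_sq_eq hw
  have hw1 : IsUnit (w - 1) := .of_mul_eq_one (w - 2) (by linear_combination hw)
  have hw2 : IsUnit (w ^ 2 - 1) := by
    rw [show w ^ 2 - 1 = (w - 1) * ((w - 1) + 2) by ring]
    exact hw1.mul (hnil.isUnit_add_left_of_commute hw1 (Commute.all _ _))
  have horder := orderOf_one_add_four_mul
    ((IsUnit.of_mul_eq_one (3 - w) (by linear_combination -hw)).mul hw1) h2 hne
  have hlift : ∀ q s, IsUnit (w ^ s - 1) → IsUnit (w ^ (3 * q + s) - 1) := by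
    intro q s hs
    obtain ⟨c, hc⟩ : (2 : S) ∣ (w ^ 3) ^ q - 1 :=
      dvd_trans ⟨2 * (w * (w - 1)), by rw [hw3]; ring⟩ (sub_one_dvd_pow_sub_one _ q)
    rw [show w ^ (3 * q + s) - 1 = (w ^ s - 1) + 2 * (c * w ^ s) by
      rw [pow_add, pow_mul]; linear_combination w ^ s * hc]
    exact ((Commute.all _ _).isNilpotent_mul_right hnil).isUnit_add_left_of_commute hs
      (Commute.all _ _)
  have hdvd : ∀ q, w ^ (3 * q) = 1 → 3 * 2 ^ j ∣ 3 * q := fun q hq =>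
    mul_dvd_mul_left 3 (horder ▸ orderOf_dvd_of_pow_eq_one (by rwa [← hw3, ← pow_mul]))
  obtain ⟨q, rfl⟩ | ⟨q, hq⟩ : 3 ∣ n ∨ 3 ∣ n + 2 := by omega
  · refine .inl (hdvd q ?_)
    exact sub_eq_zero.mp (((hlift q 2 hw2).mul_left_eq_zero).mp h)
  · obtain ⟨r, rfl⟩ : ∃ r, n = 3 * r + 1 := ⟨q - 1, by omega⟩
    refine .inr (hq ▸ hdvd q (hq ▸ ?_))
    exact sub_eq_zero.mp (((hlift r 1 (by rwa [pow_one])).mul_right_eq_zero).mp h)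

end QuadraticUnit

theorem AdjoinRoot.algebraMap_injective_of_monic {R : Type*} [CommRing R] [Nontrivial R]
    {g : R[X]} (hg : g.Monic) (hdeg : 0 < g.degree) :
    Function.Injective (algebraMap R (AdjoinRoot g)) := by
  have hC : ∀ r : R, modByMonicHom hg (algebraMap R _ r) = C r := fun r => by
    rw [algebraMap_eq, ← mk_C, modByMonicHom_mk,
      (modByMonic_eq_self_iff hg).2 (degree_C_le.trans_lt hdeg)]
  intro r s h
  have := congrArg (modByMonicHom hg) h
  rwa [hC, hC, C_inj] at this

section DicksonQuadratic

variable {R : Type*} [CommRing R] (u : R)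

theorem root_sq_eq : AdjoinRoot.root (X ^ 2 - C u * X + 1) ^ 2 =
    algebraMap R _ u * AdjoinRoot.root (X ^ 2 - C u * X + 1) - 1 := by
  have h := AdjoinRoot.eval₂_root (X ^ 2 - C u * X + 1)
  simp only [eval₂_add, eval₂_sub, eval₂_mul, eval₂_X_pow, eval₂_C, eval₂_X, eval₂_one]
    at h
  rw [AdjoinRoot.algebraMap_eq]
  linear_combination h

theorem algebraMap_injective_adjoinRoot_quadratic :
    Function.Injective (algebraMap R (AdjoinRoot (X ^ 2 - C u * X + 1))) := by
  nontriviality R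
  refine AdjoinRoot.algebraMap_injective_of_monic (by monicity!) ?_
  rw [show (X ^ 2 - C u * X + 1 : R[X]).degree = 2 by compute_degree!]
  norm_num

theorem eval_dickson_eq_self_iff (n : ℕ) :
    eval u (dickson 1 1 (n + 1)) = u ↔
      (AdjoinRoot.root (X ^ 2 - C u * X + 1) ^ n - 1) *
        (AdjoinRoot.root (X ^ 2 - C u * X + 1) ^ (n + 2) - 1) = 0 := by
  have hw := root_sq_eq u
  have hmap : algebraMap R (AdjoinRoot (X ^ 2 - C u * X + 1)) (eval u (dickson 1 1 (n + 1))) =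
      eval (algebraMap R _ u) (dickson 1 1 (n + 1)) := by
    rw [← eval₂_at_apply, ← eval_map, map_dickson, map_one]
  rw [← (algebraMap_injective_adjoinRoot_quadratic u).eq_iff, hmap, ← sub_eq_zero,
    ← pow_succ_mul_eval_dickson_sub hw,
    ((IsUnit.of_mul_eq_one _ (mul_sub_eq_one_of_sq_eq hw)).pow _).mul_right_eq_zero]

end DicksonQuadratic

section ZModTwoPow

theorem charP_adjoinRoot_quadratic {N : ℕ} (u : ZMod N) :
    CharP (AdjoinRoot (X ^ 2 - C u * X + 1)) N :=
  charP_of_injective_algebraMap (algebraMap_injective_adjoinRoot_quadratic u) N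

theorem root_sq_eq_intCast {N : ℕ} (u : ZMod N) :
    AdjoinRoot.root (X ^ 2 - C u * X + 1) ^ 2 =
      ((u.cast : ℤ) : AdjoinRoot (X ^ 2 - C u * X + 1)) *
        AdjoinRoot.root (X ^ 2 - C u * X + 1) - 1 := by
  have hu : algebraMap (ZMod N) (AdjoinRoot (X ^ 2 - C u * X + 1)) u = ((u.cast : ℤ) : _) :=
    (congrArg _ (ZMod.intCast_zmod_cast u).symm).trans (map_intCast _ _)
  rw [root_sq_eq, hu]

theorem eval_dickson_eq_self_of_le_one {e n : ℕ} (he : e ≤ 1)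
    (hn : 3 ∣ n ∨ 3 ∣ n + 2) (u : ZMod (2 ^ e)) : eval u (dickson 1 1 (n + 1)) = u := by
  have := charP_adjoinRoot_quadratic u
  have h2 : (2 : AdjoinRoot (X ^ 2 - C u * X + 1)) ^ e = 0 := by
    exact_mod_cast CharP.cast_eq_zero _ (2 ^ e)
  rw [eval_dickson_eq_self_iff]
  exact mul_pow_sub_one_eq_zero_of_two_eq_zero (root_sq_eq_intCast u)
    (by simpa using pow_eq_zero_of_le he h2) hn

theorem eval_dickson_eq_self_of_dvd {e j n : ℕ} (hj : 1 ≤ j) (he : e ≤ j + 2)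
    (hn : 3 * 2 ^ j ∣ n ∨ 3 * 2 ^ j ∣ n + 2) (u : ZMod (2 ^ e)) :
    eval u (dickson 1 1 (n + 1)) = u := by
  have := charP_adjoinRoot_quadratic u
  have h2 : (2 : AdjoinRoot (X ^ 2 - C u * X + 1)) ^ e = 0 := by
    exact_mod_cast CharP.cast_eq_zero _ (2 ^ e)
  rw [eval_dickson_eq_self_iff]
  exact mul_pow_sub_one_eq_zero_of_dvd (root_sq_eq_intCast u) hj (pow_eq_zero_of_le he h2) hn

theorem dvd_or_dvd_of_eval_dickson_three {j n : ℕ} (h3 : ¬ 3 ∣ n + 1)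
    (h : eval (3 : ZMod (2 ^ (j + 2))) (dickson 1 1 (n + 1)) = 3) :
    3 * 2 ^ j ∣ n ∨ 3 * 2 ^ j ∣ n + 2 := by
  have := charP_adjoinRoot_quadratic (3 : ZMod (2 ^ (j + 2)))
  rw [eval_dickson_eq_self_iff] at h
  refine dvd_or_dvd_of_mul_pow_sub_one_eq_zero ?_ ?_ ?_ h3 h
  · rw [root_sq_eq, map_ofNat (algebraMap _ (AdjoinRoot (X ^ 2 - C 3 * X + 1))) 3]
  · exact_mod_cast CharP.cast_eq_zero _ (2 ^ (j + 2))
  · exact_mod_cast (CharP.cast_eq_zero_iff _ (2 ^ (j + 2)) (2 ^ (j + 1))).not.mpr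
      (by rw [Nat.pow_dvd_pow_iff_le_right (by norm_num)]; omega)

end ZModTwoPow

theorem Int.natCast_add_one_modEq_one_iff {N n : ℕ} :
    ((n + 1 : ℕ) : ℤ) ≡ 1 [ZMOD N] ↔ N ∣ n := by
  rw [Int.modEq_iff_dvd, show (1 : ℤ) - ((n + 1 : ℕ) : ℤ) = -(n : ℤ) by push_cast; ring,
    Int.dvd_neg, Int.natCast_dvd_natCast]

theorem Int.natCast_add_one_modEq_neg_one_iff {N n : ℕ} :
    ((n + 1 : ℕ) : ℤ) ≡ -1 [ZMOD N] ↔ N ∣ n + 2 := by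
  rw [Int.modEq_iff_dvd,
    show (-1 : ℤ) - ((n + 1 : ℕ) : ℤ) = -((n + 2 : ℕ) : ℤ) by push_cast; ring,
    Int.dvd_neg, Int.natCast_dvd_natCast]

theorem Nat.not_three_dvd_of_coprime_three_mul {k m : ℕ} (h : Nat.Coprime k (3 * m)) :
    ¬ 3 ∣ k :=
  fun h3 => by simpa using Nat.eq_one_of_dvd_coprimes h h3 (dvd_mul_right 3 m)

theorem three_mul_two_pow_dvd_or_dvd_add_two_of_coprime {n i : ℕ} (hi : i ≤ 1)
    (h : Nat.Coprime (n + 1) (3 * 2 ^ i)) : 3 * 2 ^ i ∣ n ∨ 3 * 2 ^ i ∣ n + 2 := by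
  have h3 := Nat.not_three_dvd_of_coprime_three_mul h
  interval_cases i
  · omega
  · have h2 : ¬ 2 ∣ n + 1 := fun h2 => by
      simpa using Nat.eq_one_of_dvd_coprimes h h2 (by norm_num)
    rw [pow_one]
    have := Nat.mod_lt n (show 6 > 0 by norm_num)
    interval_cases h : n % 6 <;> omega

theorem dickson_identity_iff_pm_one_two_pow_general (e : ℕ) (k : ℕ) (hk : 0 < k) :
    (e < 3 → Nat.gcd k (3 * 2 ^ (e - 1)) = 1 →
      ((∀ u : ZMod (2 ^ e), Polynomial.eval u (Polynomial.dickson 1 1 k) = u) ↔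
        ((k : ℤ) ≡ 1 [ZMOD (3 * 2 ^ (e - 1) : ℕ)] ∨ (k : ℤ) ≡ -1 [ZMOD (3 * 2 ^ (e - 1) : ℕ)]))) ∧
    (3 ≤ e → Nat.gcd k (3 * 2 ^ (e - 2)) = 1 →
      ((∀ u : ZMod (2 ^ e), Polynomial.eval u (Polynomial.dickson 1 1 k) = u) ↔
        ((k : ℤ) ≡ 1 [ZMOD (3 * 2 ^ (e - 2) : ℕ)] ∨ (k : ℤ) ≡ -1 [ZMOD (3 * 2 ^ (e - 2) : ℕ)]))) := by
  obtain ⟨n, rfl⟩ : ∃ n, k = n + 1 := ⟨k - 1, by omega⟩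
  simp only [Int.natCast_add_one_modEq_one_iff, Int.natCast_add_one_modEq_neg_one_iff]
  refine ⟨fun he hgcd => ⟨fun _ => three_mul_two_pow_dvd_or_dvd_add_two_of_coprime (by omega) hgcd,
    fun hn u => ?_⟩, fun he hgcd => ?_⟩
  · obtain he1 | rfl : e ≤ 1 ∨ e = 2 := by omega
    · exact eval_dickson_eq_self_of_le_one he1
        (by simpa [Nat.sub_eq_zero_of_le he1] using hn) u
    · exact eval_dickson_eq_self_of_dvd le_rfl (by norm_num) hn u
  · obtain ⟨j, rfl⟩ : ∃ j, e = j + 2 := ⟨e - 2, by omega⟩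
    rw [Nat.add_sub_cancel] at hgcd ⊢
    exact ⟨fun h => dvd_or_dvd_of_eval_dickson_three
      (Nat.not_three_dvd_of_coprime_three_mul hgcd) (h 3),
      fun hn => eval_dickson_eq_self_of_dvd (by omega) le_rfl hn⟩

theorem dickson_identity_iff_pm_one_two_pow (e : ℕ) (he : 1 ≤ e) (k : ℕ) (hk : 0 < k) :
    (e < 3 → Nat.gcd k (3 * 2 ^ (e - 1)) = 1 →
      ((∀ u : ZMod (2 ^ e), Polynomial.eval u (Polynomial.dickson 1 1 k) = u) ↔
        ((k : ℤ) ≡ 1 [ZMOD (3 * 2 ^ (e - 1) : ℕ)] ∨ (k : ℤ) ≡ -1 [ZMOD (3 * 2 ^ (e - 1) : ℕ)]))) ∧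
    (3 ≤ e → Nat.gcd k (3 * 2 ^ (e - 2)) = 1 →
      ((∀ u : ZMod (2 ^ e), Polynomial.eval u (Polynomial.dickson 1 1 k) = u) ↔
        ((k : ℤ) ≡ 1 [ZMOD (3 * 2 ^ (e - 2) : ℕ)] ∨ (k : ℤ) ≡ -1 [ZMOD (3 * 2 ^ (e - 2) : ℕ)]))) :=
  dickson_identity_iff_pm_one_two_pow_general e k hk
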